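/- arXiv:1605.05479 — 5 statements merged into one kernel-verified Lean document; each statement's English description precedes it below -/
import Mathlib

section
/- For all x > 0, the logarithmic derivative of ρ(x) := exp(x/(e^x−1))/(e·x/(e^x−1)) equals e^x(e^x − 1 − x)(e^{−x} − 1 + x)/(x(e^x − 1)^2), and this quantity is strictly positive; hence ρ is strictly increasing on (0,∞). -/
open Real

noncomputable def rhoFun (x : ℝ) : ℝ :=
  Real.exp (x / (Real.exp x - 1)) / (Real.exp 1 * (x / (Real.exp x - 1)))

lemma exp_sub_one_pos {x : ℝ} (hx : 0 < x) : 0 < Real.exp x - 1 := by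
  have := Real.add_one_lt_exp hx.ne'
  linarith

lemma rho_hasDerivAt {x : ℝ} (hx : 0 < x) :
    HasDerivAt rhoFun
      ((Real.exp (x / (Real.exp x - 1)) *
          ((1 * (Real.exp x - 1) - x * Real.exp x) / (Real.exp x - 1) ^ 2) *
          (Real.exp 1 * (x / (Real.exp x - 1))) -
        Real.exp (x / (Real.exp x - 1)) *
          (Real.exp 1 * ((1 * (Real.exp x - 1) - x * Real.exp x) / (Real.exp x - 1) ^ 2))) /
        (Real.exp 1 * (x / (Real.exp x - 1))) ^ 2) x := by
  have hE := exp_sub_one_pos hx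
  have hu : HasDerivAt (fun y => y / (Real.exp y - 1))
      ((1 * (Real.exp x - 1) - x * Real.exp x) / (Real.exp x - 1) ^ 2) x :=
    (hasDerivAt_id x).div ((Real.hasDerivAt_exp x).sub_const 1) hE.ne'
  have hN : HasDerivAt (fun y => Real.exp (y / (Real.exp y - 1)))
      (Real.exp (x / (Real.exp x - 1)) *
        ((1 * (Real.exp x - 1) - x * Real.exp x) / (Real.exp x - 1) ^ 2)) x := hu.exp
  have hD : HasDerivAt (fun y => Real.exp 1 * (y / (Real.exp y - 1)))
      (Real.exp 1 * ((1 * (Real.exp x - 1) - x * Real.exp x) / (Real.exp x - 1) ^ 2)) x :=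
    hu.const_mul _
  have hD0 : Real.exp 1 * (x / (Real.exp x - 1)) ≠ 0 := by
    positivity
  exact hN.div hD hD0

theorem rho_log_deriv_pos :
    (∀ x > 0,
      deriv rhoFun x / rhoFun x =
        Real.exp x * (Real.exp x - 1 - x) * (Real.exp (-x) - 1 + x) /
          (x * (Real.exp x - 1) ^ 2) ∧
      0 < Real.exp x * (Real.exp x - 1 - x) * (Real.exp (-x) - 1 + x) /
          (x * (Real.exp x - 1) ^ 2)) ∧
    StrictMonoOn rhoFun (Set.Ioi 0) := by
  have key : ∀ x > (0:ℝ),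
      deriv rhoFun x / rhoFun x =
        Real.exp x * (Real.exp x - 1 - x) * (Real.exp (-x) - 1 + x) /
          (x * (Real.exp x - 1) ^ 2) ∧
      0 < Real.exp x * (Real.exp x - 1 - x) * (Real.exp (-x) - 1 + x) /
          (x * (Real.exp x - 1) ^ 2) := by
    intro x hx
    have hE := exp_sub_one_pos hx
    have hEx : 0 < Real.exp x := Real.exp_pos x
    have hd := (rho_hasDerivAt hx).deriv
    constructor
    · rw [hd, rhoFun, Real.exp_neg]
      have h1 : Real.exp (x / (Real.exp x - 1)) ≠ 0 := (Real.exp_pos _).ne'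
      have h2 : Real.exp 1 ≠ 0 := (Real.exp_pos _).ne'
      field_simp
      ring
    · have hA : 0 < Real.exp x - 1 - x := by
        have := Real.add_one_lt_exp hx.ne'; linarith
      have hB : 0 < Real.exp (-x) - 1 + x := by
        have := Real.add_one_lt_exp (neg_ne_zero.mpr hx.ne'); linarith
      have : 0 < x * (Real.exp x - 1) ^ 2 := by positivity
      exact div_pos (by positivity) this
  refine ⟨key, ?_⟩
  have hderiv : ∀ x ∈ interior (Set.Ioi (0:ℝ)), 0 < deriv rhoFun x := by
    rw [interior_Ioi]
    intro x hx
    have hx' : 0 < x := hx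
    have hE := exp_sub_one_pos hx'
    have hρ : 0 < rhoFun x := by
      rw [rhoFun]; positivity
    have h := (key x hx').2
    rw [← (key x hx').1] at h
    have := mul_pos h hρ
    rwa [div_mul_cancel₀ _ hρ.ne'] at this
  exact strictMonoOn_of_deriv_pos (convex_Ioi 0)
    (fun x hx => ((rho_hasDerivAt hx).differentiableAt.continuousAt).continuousWithinAt)
    hderiv
end

section
/- For x > 0 set h(x) = x/(e^x − 1) and H(x) = x/(1 − e^{−x}). Then 0 < h(x) < 1 < H(x), and the functions u, U defined implicitly by t·e^{1−t} = e^{−y} (with u < 1 < U) satisfy u(log ρ(x)) = h(x) and U(log ρ(x)) = H(x), where ρ(x) = exp(h(x))/(e·h(x)). -/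
open Real

/-! With `f t = t * exp (1 - t)` and `h = x / (exp x - 1)`, one has `H = h + x` and
`h + x = h * exp x`, which gives `f H = f h = (rhoFun x)⁻¹`. Since `f` increases on `(-∞, 1]`
and decreases on `[1, ∞)`, `h` and `H` are the only solutions of `f t = exp (-log (rhoFun x))`
on either side of `1`. -/

lemma hasDerivAt_mul_exp_one_sub (t : ℝ) :
    HasDerivAt (fun t : ℝ => t * exp (1 - t)) ((1 - t) * exp (1 - t)) t := by
  have h : HasDerivAt (fun t : ℝ => t * exp (1 - t))
      (1 * exp (1 - t) + t * (exp (1 - t) * -1)) t :=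
    (hasDerivAt_id t).mul ((hasDerivAt_id t).const_sub 1).exp
  convert h using 1
  ring

lemma strictMonoOn_mul_exp_one_sub : StrictMonoOn (fun t : ℝ => t * exp (1 - t)) (Set.Iic 1) := by
  refine strictMonoOn_of_deriv_pos (convex_Iic 1) (by fun_prop) ?_
  intro t ht
  rw [interior_Iic, Set.mem_Iio] at ht
  rw [(hasDerivAt_mul_exp_one_sub t).deriv]
  exact mul_pos (by linarith) (exp_pos _)

lemma strictAntiOn_mul_exp_one_sub : StrictAntiOn (fun t : ℝ => t * exp (1 - t)) (Set.Ici 1) := by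
  refine strictAntiOn_of_deriv_neg (convex_Ici 1) (by fun_prop) ?_
  intro t ht
  rw [interior_Ici, Set.mem_Ioi] at ht
  rw [(hasDerivAt_mul_exp_one_sub t).deriv]
  exact mul_neg_of_neg_of_pos (by linarith) (exp_pos _)

lemma mul_exp_one_sub_le_one (t : ℝ) : t * exp (1 - t) ≤ 1 := by
  rcases le_total t 1 with ht | ht
  · simpa using strictMonoOn_mul_exp_one_sub.monotoneOn ht (Set.mem_Iic.2 le_rfl) ht
  · simpa using strictAntiOn_mul_exp_one_sub.antitoneOn (Set.mem_Ici.2 le_rfl) ht ht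

lemma mul_exp_one_sub_add_eq {h x : ℝ} (hx : h + x = h * exp x) :
    (h + x) * exp (1 - (h + x)) = h * exp (1 - h) := by
  rw [show 1 - (h + x) = 1 - h - x by ring, exp_sub, hx]
  field_simp

lemma inv_exp_div_exp_one_mul {h : ℝ} (hh : h ≠ 0) :
    (exp h / (exp 1 * h))⁻¹ = h * exp (1 - h) := by
  rw [inv_div, exp_sub]
  field_simp

section

variable {x : ℝ} (hx : 0 < x)
include hx

lemma div_exp_sub_one_pos : 0 < x / (exp x - 1) :=
  div_pos hx (by linarith [add_one_lt_exp hx.ne'])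

lemma div_exp_sub_one_lt_one : x / (exp x - 1) < 1 :=
  (div_lt_one (by linarith [add_one_lt_exp hx.ne'])).2 (by linarith [add_one_lt_exp hx.ne'])

lemma div_exp_sub_one_add_self : x / (exp x - 1) + x = x / (exp x - 1) * exp x := by
  have hden : exp x - 1 ≠ 0 := by linarith [add_one_lt_exp hx.ne']
  field_simp
  ring

lemma div_one_sub_exp_neg_eq : x / (1 - exp (-x)) = x / (exp x - 1) + x := by
  rw [div_exp_sub_one_add_self hx, exp_neg]
  have hden : exp x - 1 ≠ 0 := by linarith [add_one_lt_exp hx.ne']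
  field_simp

lemma one_lt_div_one_sub_exp_neg : 1 < x / (1 - exp (-x)) := by
  have h := add_one_lt_exp (neg_ne_zero.2 hx.ne')
  have h' : exp (-x) < 1 := exp_lt_one_iff.2 (neg_neg_of_pos hx)
  exact (one_lt_div (by linarith)).2 (by linarith)

lemma exp_neg_log_rhoFun :
    exp (-log (rhoFun x)) = x / (exp x - 1) * exp (1 - x / (exp x - 1)) := by
  have hh := div_exp_sub_one_pos hx
  have hρ : 0 < rhoFun x := div_pos (exp_pos _) (mul_pos (exp_pos 1) hh)
  rw [exp_neg, exp_log hρ, rhoFun, inv_exp_div_exp_one_mul hh.ne']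

lemma log_rhoFun_nonneg : 0 ≤ log (rhoFun x) := by
  have h := exp_neg_log_rhoFun hx ▸ mul_exp_one_sub_le_one (x / (exp x - 1))
  rwa [exp_le_one_iff, neg_nonpos] at h

end

theorem watson_u_U_of_rho (u U : ℝ → ℝ)
    (hu : ∀ y ≥ 0, u y ∈ Set.Ioc (0 : ℝ) 1 ∧ u y * Real.exp (1 - u y) = Real.exp (-y))
    (hU : ∀ y ≥ 0, U y ∈ Set.Ici (1 : ℝ) ∧ U y * Real.exp (1 - U y) = Real.exp (-y)) :
    ∀ x > 0,
      0 < x / (Real.exp x - 1) ∧ x / (Real.exp x - 1) < 1 ∧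
      1 < x / (1 - Real.exp (-x)) ∧
      u (Real.log (rhoFun x)) = x / (Real.exp x - 1) ∧
      U (Real.log (rhoFun x)) = x / (1 - Real.exp (-x)) := by
  intro x hx
  have hy := log_rhoFun_nonneg hx
  obtain ⟨⟨-, hu_le⟩, hu_eq⟩ := hu _ hy
  obtain ⟨hU_ge, hU_eq⟩ := hU _ hy
  have hH := one_lt_div_one_sub_exp_neg hx
  refine ⟨div_exp_sub_one_pos hx, div_exp_sub_one_lt_one hx, hH, ?_, ?_⟩
  · refine strictMonoOn_mul_exp_one_sub.injOn hu_le (div_exp_sub_one_lt_one hx).le ?_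
    rw [hu_eq, exp_neg_log_rhoFun hx]
  · refine strictAntiOn_mul_exp_one_sub.injOn hU_ge hH.le ?_
    rw [hU_eq, exp_neg_log_rhoFun hx, div_one_sub_exp_neg_eq hx,
      mul_exp_one_sub_add_eq (div_exp_sub_one_add_self hx)]
end

section
/- Let S_1(x) = (−2−x) + (8−3x−3x²)e^x + (−14+9x−6x²−5x³)e^{2x} + (16+18x²−2x⁴)e^{3x} + (−14−9x−6x²+5x³)e^{4x} + (8+3x−3x²)e^{5x} + (−2+x)e^{6x}. Then all Taylor coefficients of S_1 at 0 are non-negative; in particular S_1(x) ≥ 0 for all x ≥ 0. -/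
/-!
Write `S1 x = exp (3x) * (V x + V (-x))` with
`V x = 8 + 9x² - x⁴ + (-14 - 9x - 6x² + 5x³)eˣ + (8 + 3x - 3x²)e²ˣ + (-2 + x)e³ˣ`.
If `vₙ` are the Taylor coefficients of `V`, those of `V x + V (-x)` are `(1 + (-1)ⁿ) vₙ`: they
vanish for `n ≤ 8`, and for `n ≥ 9` we have `vₙ ≥ 0` because the `3ⁿ` terms of `n! vₙ` outgrow
the `n² 2ⁿ` ones. Multiplying by `exp (3x)`, whose coefficients are positive, keeps every
coefficient non-negative, and these give both the derivatives at `0` and the values at `x ≥ 0`.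
-/

open Real

noncomputable def S1 (x : ℝ) : ℝ :=
  (-2 - x) + (8 - 3*x - 3*x^2) * Real.exp x + (-14 + 9*x - 6*x^2 - 5*x^3) * Real.exp (2*x) +
  (16 + 18*x^2 - 2*x^4) * Real.exp (3*x) + (-14 - 9*x - 6*x^2 + 5*x^3) * Real.exp (4*x) +
  (8 + 3*x - 3*x^2) * Real.exp (5*x) + (-2 + x) * Real.exp (6*x)

open Finset Nat FormalMultilinearSeries

def HasEntireSeries (f : ℝ → ℝ) (a : ℕ → ℝ) : Prop :=
  ∀ x, HasSum (fun n => a n * x ^ n) (f x)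

namespace HasEntireSeries

variable {f g : ℝ → ℝ} {a b : ℕ → ℝ}

theorem add (hf : HasEntireSeries f a) (hg : HasEntireSeries g b) :
    HasEntireSeries (fun x => f x + g x) (fun n => a n + b n) :=
  fun x => ((hf x).add (hg x)).congr_fun fun _ => add_mul _ _ _

theorem const_mul (hf : HasEntireSeries f a) (c : ℝ) :
    HasEntireSeries (fun x => c * f x) (fun n => c * a n) :=
  fun x => ((hf x).mul_left c).congr_fun fun _ => mul_assoc _ _ _

theorem comp_neg (hf : HasEntireSeries f a) :
    HasEntireSeries (fun x => f (-x)) (fun n => (-1) ^ n * a n) :=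
  fun x => (hf (-x)).congr_fun fun n => by rw [neg_pow]; ring

theorem radius_ofScalars (hf : HasEntireSeries f a) : (ofScalars ℝ a).radius = ⊤ :=
  ENNReal.eq_top_of_forall_nnreal_le fun r => (ofScalars ℝ a).le_radius_of_tendsto (l := 0) <| by
    simpa [ofScalars_norm, norm_mul] using (hf r).summable.tendsto_atTop_zero.norm

theorem summable_norm (hf : HasEntireSeries f a) (x : ℝ) : Summable fun n => ‖a n * x ^ n‖ := by
  simpa [ofScalars_norm, norm_mul] using
    (ofScalars ℝ a).summable_norm_mul_pow (r := ‖x‖₊) (hf.radius_ofScalars ▸ ENNReal.coe_lt_top)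

theorem mul (hf : HasEntireSeries f a) (hg : HasEntireSeries g b) :
    HasEntireSeries (fun x => f x * g x) (fun n => ∑ i ∈ range (n + 1), a i * b (n - i)) := by
  intro x
  have h := hasSum_sum_range_mul_of_summable_norm (hf.summable_norm x) (hg.summable_norm x)
  rw [(hf x).tsum_eq, (hg x).tsum_eq] at h
  refine h.congr_fun fun n => ?_
  rw [sum_mul]
  refine sum_congr rfl fun i hi => ?_
  rw [← pow_mul_pow_sub x (mem_range_succ_iff.mp hi)]
  ring

theorem hasFPowerSeriesOnBall (hf : HasEntireSeries f a) :
    HasFPowerSeriesOnBall f (ofScalars ℝ a) 0 ⊤ where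
  r_le := hf.radius_ofScalars.ge
  r_pos := ENNReal.zero_lt_top
  hasSum _ := by simpa [ofScalars_apply_eq, mul_comm] using hf _

theorem iteratedDeriv_zero (hf : HasEntireSeries f a) (n : ℕ) :
    iteratedDeriv n f 0 = n ! * a n := by
  rw [iteratedDeriv_eq_iteratedFDeriv, ← hf.hasFPowerSeriesOnBall.factorial_smul 1 n]
  simp

theorem nonneg (hf : HasEntireSeries f a) (ha : ∀ n, 0 ≤ a n) {x : ℝ} (hx : 0 ≤ x) : 0 ≤ f x :=
  (hf x).nonneg fun n => mul_nonneg (ha n) (pow_nonneg hx n)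

end HasEntireSeries

theorem hasEntireSeries_exp (k : ℝ) :
    HasEntireSeries (fun x => exp (k * x)) (fun n => k ^ n / n !) := fun x => by
  rw [exp_eq_exp_ℝ]
  exact (NormedSpace.expSeries_div_hasSum_exp (k * x)).congr_fun fun n => by ring

theorem hasEntireSeries_pow (j : ℕ) :
    HasEntireSeries (· ^ j) (fun n => if n = j then 1 else 0) := fun x => by
  refine (hasSum_ite_eq j (x ^ j)).congr_fun fun n => ?_
  split_ifs with h <;> simp [h]

noncomputable def powMulExpCoeff (k : ℝ) (j n : ℕ) : ℝ :=
  if j ≤ n then k ^ (n - j) / (n - j)! else 0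

theorem hasEntireSeries_pow_mul_exp (k : ℝ) (j : ℕ) :
    HasEntireSeries (fun x => x ^ j * exp (k * x)) (powMulExpCoeff k j) := by
  convert (hasEntireSeries_pow j).mul (hasEntireSeries_exp k) using 2 with n
  simp [powMulExpCoeff, ite_mul]

theorem powMulExpCoeff_zero_left {j n : ℕ} (h : j < n) : powMulExpCoeff 0 j n = 0 := by
  simp [powMulExpCoeff, h.le, (Nat.sub_pos_of_lt h).ne']

theorem two_pow_mul_le_three_pow_mul {m : ℕ} (hm : 6 ≤ m) :
    2 * 2 ^ m * (3 * m ^ 2 + 9 * m - 32 : ℝ) ≤ 9 * 3 ^ m * (m - 3) := by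
  induction m, hm using Nat.le_induction with
  | base => norm_num
  | succ m hm ih =>
    have hm' : (6 : ℝ) ≤ m := by exact_mod_cast hm
    have hB : (0 : ℝ) < 2 ^ m := by positivity
    have hstep : 4 * 2 ^ m * (3 * (m : ℝ) ^ 2 + 15 * m - 20) * (m - 3) ≤
        27 * 3 ^ m * ((m : ℝ) - 2) * (m - 3) := by
      nlinarith [mul_le_mul_of_nonneg_left ih (by linarith : (0 : ℝ) ≤ 3 * (m - 2)),
        mul_nonneg hB.le (by nlinarith : (0 : ℝ) ≤ 3 * m ^ 3 - 3 * m ^ 2 - 20 * m + 72)]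
    push_cast
    rw [pow_succ (2 : ℝ), pow_succ (3 : ℝ)]
    nlinarith [le_of_mul_le_mul_right hstep (by linarith : (0 : ℝ) < m - 3)]

noncomputable def S1Half (x : ℝ) : ℝ :=
  8 + 9 * x ^ 2 - x ^ 4 + (-14 - 9 * x - 6 * x ^ 2 + 5 * x ^ 3) * exp x +
    (8 + 3 * x - 3 * x ^ 2) * exp (2 * x) + (-2 + x) * exp (3 * x)

noncomputable def S1HalfCoeff (n : ℕ) : ℝ :=
  8 * powMulExpCoeff 0 0 n + 9 * powMulExpCoeff 0 2 n - powMulExpCoeff 0 4 n -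
    14 * powMulExpCoeff 1 0 n - 9 * powMulExpCoeff 1 1 n - 6 * powMulExpCoeff 1 2 n +
    5 * powMulExpCoeff 1 3 n + 8 * powMulExpCoeff 2 0 n + 3 * powMulExpCoeff 2 1 n -
    3 * powMulExpCoeff 2 2 n - 2 * powMulExpCoeff 3 0 n + powMulExpCoeff 3 1 n

theorem hasEntireSeries_S1Half : HasEntireSeries S1Half S1HalfCoeff := by
  have h := hasEntireSeries_pow_mul_exp
  convert (((((((((((((h 0 0).const_mul 8).add ((h 0 2).const_mul 9)).add
    ((h 0 4).const_mul (-1))).add ((h 1 0).const_mul (-14))).add ((h 1 1).const_mul (-9))).add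
    ((h 1 2).const_mul (-6))).add ((h 1 3).const_mul 5)).add ((h 2 0).const_mul 8)).add
    ((h 2 1).const_mul 3)).add ((h 2 2).const_mul (-3))).add ((h 3 0).const_mul (-2))).add
    (h 3 1)) using 1 <;> funext x <;> simp only [S1Half, S1HalfCoeff] <;> simp <;> ring

theorem factorial_mul_S1HalfCoeff {m : ℕ} (hm : 2 ≤ m) :
    ((m + 3)! : ℝ) * S1HalfCoeff (m + 3) =
      9 * 3 ^ m * (m - 3) - 2 * 2 ^ m * (3 * m ^ 2 + 9 * m - 32) +
        (5 * (m + 3) * (m + 2) * (m + 1) - 6 * (m + 3) * (m + 2) - 9 * (m + 3) - 14) := by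
  simp only [S1HalfCoeff, powMulExpCoeff_zero_left (by omega : 0 < m + 3),
    powMulExpCoeff_zero_left (by omega : 2 < m + 3),
    powMulExpCoeff_zero_left (by omega : 4 < m + 3)]
  have f1 : ((m + 1)! : ℝ) = (m + 1) * m ! := by push_cast [factorial_succ]; ring
  have f2 : ((m + 2)! : ℝ) = (m + 2) * (m + 1) * m ! := by push_cast [factorial_succ]; ring
  have f3 : ((m + 3)! : ℝ) = (m + 3) * (m + 2) * (m + 1) * m ! := by
    push_cast [factorial_succ]; ring
  simp [powMulExpCoeff, f1, f2, f3, pow_succ]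
  field_simp
  ring

theorem S1HalfCoeff_nonneg {n : ℕ} (hn : 9 ≤ n) : 0 ≤ S1HalfCoeff n := by
  obtain ⟨m, rfl⟩ : ∃ m, n = m + 3 := ⟨n - 3, by omega⟩
  have hm : (6 : ℝ) ≤ m := by exact_mod_cast (by omega : 6 ≤ m)
  rw [← mul_nonneg_iff_of_pos_left (by positivity : (0 : ℝ) < (m + 3)!),
    factorial_mul_S1HalfCoeff (by omega)]
  nlinarith [two_pow_mul_le_three_pow_mul (by omega : 6 ≤ m)]

theorem S1HalfCoeff_add_neg_one_pow_mul_nonneg (n : ℕ) :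
    0 ≤ S1HalfCoeff n + (-1) ^ n * S1HalfCoeff n := by
  rcases lt_or_ge n 9 with hn | hn
  · interval_cases n <;> norm_num [S1HalfCoeff, powMulExpCoeff, factorial]
  · rcases neg_one_pow_eq_or ℝ n with h | h <;> rw [h] <;> linarith [S1HalfCoeff_nonneg hn]

theorem S1_eq_exp_mul (x : ℝ) : S1 x = exp (3 * x) * (S1Half x + S1Half (-x)) := by
  have e {a b : ℝ} (h : 3 * x + a = b) : exp b = exp (3 * x) * exp a := by rw [← h, exp_add]
  simp only [S1, S1Half]
  linear_combination (-2 - x) * exp_zero.symm.trans (e (a := 3 * -x) (by ring))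
    + (8 - 3 * x - 3 * x ^ 2) * e (a := 2 * -x) (b := x) (by ring)
    + (-14 + 9 * x - 6 * x ^ 2 - 5 * x ^ 3) * e (a := -x) (b := 2 * x) (by ring)
    + (-14 - 9 * x - 6 * x ^ 2 + 5 * x ^ 3) * e (a := x) (b := 4 * x) (by ring)
    + (8 + 3 * x - 3 * x ^ 2) * e (a := 2 * x) (b := 5 * x) (by ring)
    + (-2 + x) * e (a := 3 * x) (b := 6 * x) (by ring)

noncomputable def S1Coeff (n : ℕ) : ℝ :=
  ∑ i ∈ range (n + 1), 3 ^ i / i ! * (S1HalfCoeff (n - i) + (-1) ^ (n - i) * S1HalfCoeff (n - i))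

theorem hasEntireSeries_S1 : HasEntireSeries S1 S1Coeff := by
  have h := (hasEntireSeries_exp 3).mul
    (hasEntireSeries_S1Half.add hasEntireSeries_S1Half.comp_neg)
  rw [show S1 = _ from funext S1_eq_exp_mul]
  exact h

theorem S1Coeff_nonneg (n : ℕ) : 0 ≤ S1Coeff n :=
  sum_nonneg fun i _ => mul_nonneg (by positivity) (S1HalfCoeff_add_neg_one_pow_mul_nonneg _)

theorem S1_taylor_nonneg :
    (∀ n : ℕ, 0 ≤ iteratedDeriv n S1 0) ∧ ∀ x : ℝ, 0 ≤ x → 0 ≤ S1 x :=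
  ⟨fun n => hasEntireSeries_S1.iteratedDeriv_zero n ▸ mul_nonneg (by positivity) (S1Coeff_nonneg n),
    fun _ hx => hasEntireSeries_S1.nonneg S1Coeff_nonneg hx⟩
end

section
/- Let f(x) = Σ_{k=0}^m P_k(x)e^{kx} be an exponential polynomial with real polynomials P_k of exact degree n_k. Define f_0 = f and f_{k+1}(x) = f_k^{(n_k+1)}(x)·e^{−x} for k = 0,…,m−1. If f_k^{(s)}(0) ≥ 0 for all s = 0,…,n_k and k = 0,…,m, then all Taylor coefficients of f at 0 are non-negative; in particular f(x) ≥ 0 for all x ≥ 0. -/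
/-!
Call `g` absolutely monotone on `[0, ∞)` when `g` and all its derivatives are nonnegative there.
If `g⁽ˢ⁾(0) ≥ 0` for `s ≤ N` and `g⁽ᴺ⁺¹⁾` is absolutely monotone, then so is `g`: each lower
derivative starts nonnegative at `0` and is nondecreasing. Going backwards from `f_m`: it is a
polynomial of degree `n_m`, so `f_m^(n_m+1) = 0`; and for `k < m`, `f_k^(n_k+1) = f_{k+1} · eˣ` is a
product of absolutely monotone functions, hence absolutely monotone by the Leibniz rule. So
`f = f_0` is absolutely monotone on `[0, ∞)`. Each `f_k` is smooth because it is again an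
exponential polynomial: differentiating `n_k + 1` times kills the term `P(x) e^{0x}` of degree
`≤ n_k`, and the factor `e^{-x}` lowers every remaining exponent by one.
-/

open Real Polynomial Set
open scoped ContDiff

lemma ContDiff.absolutelyMonotoneOn_iff {f : ℝ → ℝ} {s : Set ℝ} (hf : ContDiff ℝ ∞ f)
    (hs : UniqueDiffOn ℝ s) :
    AbsolutelyMonotoneOn f s ↔ ∀ n : ℕ, ∀ x ∈ s, 0 ≤ iteratedDeriv n f x := by
  refine ⟨fun h n x hx => ?_, AbsolutelyMonotoneOn.of_contDiff hf⟩
  rw [← iteratedDerivWithin_eq_iteratedDeriv hs (hf.of_le (mod_cast le_top)).contDiffAt hx]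
  exact h.iteratedDerivWithin_nonneg hs n hx

lemma absolutelyMonotoneOn_exp (s : Set ℝ) : AbsolutelyMonotoneOn rexp s :=
  .of_contDiff contDiff_exp fun n x _ => by
    rw [iteratedDeriv_eq_iterate, iter_deriv_exp]; exact (exp_pos x).le

lemma AbsolutelyMonotoneOn.mul {f g : ℝ → ℝ} {s : Set ℝ} (hs : UniqueDiffOn ℝ s)
    (hf : ContDiff ℝ ∞ f) (hg : ContDiff ℝ ∞ g) (hfs : AbsolutelyMonotoneOn f s)
    (hgs : AbsolutelyMonotoneOn g s) : AbsolutelyMonotoneOn (f * g) s := by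
  rw [hf.absolutelyMonotoneOn_iff hs] at hfs
  rw [hg.absolutelyMonotoneOn_iff hs] at hgs
  refine .of_contDiff (hf.mul hg) fun n x hx => ?_
  rw [iteratedDeriv_mul (hf.of_le (mod_cast le_top)).contDiffAt
    (hg.of_le (mod_cast le_top)).contDiffAt]
  exact Finset.sum_nonneg fun i _ =>
    mul_nonneg (mul_nonneg (Nat.cast_nonneg _) (hfs i x hx)) (hgs (n - i) x hx)

lemma nonneg_of_deriv_nonneg_Ici {h : ℝ → ℝ} {a : ℝ} (hd : Differentiable ℝ h) (ha : 0 ≤ h a)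
    (hderiv : ∀ x ∈ Ici a, 0 ≤ deriv h x) : ∀ x ∈ Ici a, 0 ≤ h x := fun _ hx =>
  ha.trans <| monotoneOn_of_deriv_nonneg (convex_Ici a) hd.continuous.continuousOn
    hd.differentiableOn (fun y hy => hderiv y (interior_subset hy)) self_mem_Ici hx hx

lemma absolutelyMonotoneOn_Ici_of_iteratedDeriv {g : ℝ → ℝ} {a : ℝ} {N : ℕ}
    (hg : ContDiff ℝ ∞ g) (ha : ∀ s ≤ N, 0 ≤ iteratedDeriv s g a)
    (hN : AbsolutelyMonotoneOn (iteratedDeriv (N + 1) g) (Ici a)) :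
    AbsolutelyMonotoneOn g (Ici a) := by
  have hN' : ContDiff ℝ ∞ (iteratedDeriv (N + 1) g) := by
    rw [iteratedDeriv_eq_iterate]; exact hg.iterate_deriv _
  rw [hN'.absolutelyMonotoneOn_iff (uniqueDiffOn_Ici a)] at hN
  refine .of_contDiff hg fun j => ?_
  rcases le_or_gt j N with hj | hj
  · have hjN : j ≤ N + 1 := hj.trans N.le_succ
    clear hj
    induction hjN using Nat.decreasingInduction with
    | self => exact hN 0
    | of_succ s hs ih =>
        refine nonneg_of_deriv_nonneg_Ici
          (hg.differentiable_iteratedDeriv s (mod_cast WithTop.coe_lt_top _))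
          (ha s (by omega)) fun x hx => ?_
        rw [← iteratedDeriv_succ]
        exact ih x hx
  · obtain ⟨i, rfl⟩ := Nat.exists_eq_add_of_lt hj
    intro x hx
    have := hN i x hx
    rwa [iteratedDeriv_eq_iterate, iteratedDeriv_eq_iterate, ← Function.iterate_add_apply,
      ← iteratedDeriv_eq_iterate, show i + (N + 1) = N + i + 1 by omega] at this

lemma hasDerivAt_eval_mul_exp (Q : ℝ[X]) (c x : ℝ) :
    HasDerivAt (fun x => Q.eval x * rexp (c * x))
      ((derivative Q + c • Q).eval x * rexp (c * x)) x := by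
  refine ((Q.hasDerivAt x).fun_mul ((hasDerivAt_id' x).const_mul c).exp).congr_deriv ?_
  simp only [eval_add, eval_smul, smul_eq_mul]
  ring

lemma natDegree_iterate_derivative_add_smul_le {R : Type*} [Semiring R] (c : R) (N : ℕ)
    (Q : R[X]) :
    ((fun p : R[X] => derivative p + c • p)^[N] Q).natDegree ≤ Q.natDegree := by
  induction N with
  | zero => rfl
  | succ N ih =>
      rw [Function.iterate_succ_apply']
      refine (natDegree_add_le _ _).trans (max_le ?_ ((natDegree_smul_le _ _).trans ih))
      exact (natDegree_derivative_le _).trans (Nat.sub_le _ _ |>.trans ih)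

lemma iteratedDeriv_sum_eval_mul_exp {ι : Type*} (s : Finset ι) (Q : ι → ℝ[X]) (c : ι → ℝ)
    (N : ℕ) :
    iteratedDeriv N (fun x => ∑ i ∈ s, (Q i).eval x * rexp (c i * x)) =
      fun x => ∑ i ∈ s, ((fun p => derivative p + c i • p)^[N] (Q i)).eval x * rexp (c i * x) := by
  induction N with
  | zero => simp
  | succ N ih =>
      rw [iteratedDeriv_succ, ih]
      funext x
      refine (HasDerivAt.fun_sum fun i _ => ?_).deriv
      rw [Function.iterate_succ_apply']
      exact hasDerivAt_eval_mul_exp _ _ x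

/-- `r` counts the exponentials `e^{jx}`, `j < r`, so the order in the usual sense is `r - 1`. -/
def IsExpPoly (d : ℕ → ℕ) (r : ℕ) (g : ℝ → ℝ) : Prop :=
  ∃ Q : ℕ → ℝ[X], (∀ j < r, (Q j).natDegree ≤ d j) ∧
    g = fun x => ∑ j ∈ Finset.range r, (Q j).eval x * rexp (j * x)

namespace IsExpPoly

variable {d : ℕ → ℕ} {r : ℕ} {g : ℝ → ℝ}

lemma contDiff (h : IsExpPoly d r g) : ContDiff ℝ ∞ g := by
  obtain ⟨Q, -, rfl⟩ := h
  exact ContDiff.sum fun j _ =>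
    (Q j).contDiff_aeval _ |>.mul (contDiff_exp.comp (contDiff_const.mul contDiff_id))

lemma iteratedDeriv_mul_exp_neg (h : IsExpPoly d (r + 1) g) :
    IsExpPoly (fun j => d (j + 1)) r (fun x => iteratedDeriv (d 0 + 1) g x * rexp (-x)) := by
  obtain ⟨Q, hQ, rfl⟩ := h
  refine ⟨fun j => (fun p => derivative p + ((j + 1 : ℕ) : ℝ) • p)^[d 0 + 1] (Q (j + 1)),
    fun j hj => (natDegree_iterate_derivative_add_smul_le _ _ _).trans (hQ _ (by omega)), ?_⟩
  have hQ0 : derivative^[d 0 + 1] (Q 0) = 0 :=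
    iterate_derivative_eq_zero (Nat.lt_succ_of_le (hQ 0 r.succ_pos))
  funext x
  rw [iteratedDeriv_sum_eval_mul_exp]
  dsimp only
  rw [Finset.sum_range_succ']
  simp only [Nat.cast_zero, zero_smul, add_zero, hQ0, eval_zero, zero_mul]
  rw [Finset.sum_mul]
  refine Finset.sum_congr rfl fun j _ => ?_
  rw [mul_assoc, ← exp_add]
  congr 2
  push_cast
  ring

lemma iteratedDeriv_eq_zero (h : IsExpPoly d 1 g) : iteratedDeriv (d 0 + 1) g = 0 := by
  obtain ⟨Q, -, hQ⟩ := h.iteratedDeriv_mul_exp_neg (r := 0)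
  funext x
  simpa [(exp_pos _).ne'] using congrFun hQ x

end IsExpPoly

lemma IsExpPoly.of_reduction {d : ℕ → ℕ} {m : ℕ} {g : ℕ → ℝ → ℝ}
    (h0 : IsExpPoly d (m + 1) (g 0))
    (hsucc : ∀ k < m, g (k + 1) = fun x => iteratedDeriv (d k + 1) (g k) x * rexp (-x)) :
    ∀ k ≤ m, IsExpPoly (fun j => d (k + j)) (m - k + 1) (g k) := by
  intro k hk
  induction k with
  | zero => simpa using h0
  | succ k ih =>
      have h := ih (by omega)
      rw [show m - k + 1 = m - (k + 1) + 1 + 1 by omega] at h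
      rw [hsucc k (by omega)]
      simpa only [add_assoc, add_comm 1, add_zero] using h.iteratedDeriv_mul_exp_neg

lemma absolutelyMonotoneOn_Ici_of_reduction {d : ℕ → ℕ} {m : ℕ} {g : ℕ → ℝ → ℝ} {a : ℝ}
    (hg : ∀ k ≤ m, ContDiff ℝ ∞ (g k)) (hm : iteratedDeriv (d m + 1) (g m) = 0)
    (hsucc : ∀ k < m, g (k + 1) = fun x => iteratedDeriv (d k + 1) (g k) x * rexp (-x))
    (ha : ∀ k ≤ m, ∀ s ≤ d k, 0 ≤ iteratedDeriv s (g k) a) :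
    ∀ k ≤ m, AbsolutelyMonotoneOn (g k) (Ici a) := by
  intro k hk
  induction hk using Nat.decreasingInduction with
  | self =>
      refine absolutelyMonotoneOn_Ici_of_iteratedDeriv (hg m le_rfl) (ha m le_rfl) ?_
      rw [hm]
      exact .of_contDiff contDiff_const fun _ _ _ => by simp
  | of_succ k hk ih =>
      refine absolutelyMonotoneOn_Ici_of_iteratedDeriv (hg k hk.le) (ha k hk.le) ?_
      have h : iteratedDeriv (d k + 1) (g k) = g (k + 1) * rexp := by
        funext x
        rw [hsucc k hk, Pi.mul_apply, mul_assoc, ← exp_add, neg_add_cancel, exp_zero, mul_one]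
      rw [h]
      exact ih.mul (uniqueDiffOn_Ici a) (hg (k + 1) hk) contDiff_exp (absolutelyMonotoneOn_exp _)

theorem exp_poly_algorithm (m : ℕ) (P : ℕ → Polynomial ℝ) (n : ℕ → ℕ)
    (f : ℝ → ℝ)
    (hdeg : ∀ k ≤ m, (P k).degree = (n k : ℕ))
    (hf : f = fun x => ∑ k ∈ Finset.range (m + 1), (P k).eval x * Real.exp (k * x))
    (fseq : ℕ → (ℝ → ℝ))
    (hfseq0 : fseq 0 = f)
    (hfseqsucc : ∀ k < m, fseq (k + 1) =
      fun x => iteratedDeriv (n k + 1) (fseq k) x * Real.exp (-x))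
    (hcond : ∀ k ≤ m, ∀ s ≤ n k, 0 ≤ iteratedDeriv s (fseq k) 0) :
    (∀ j : ℕ, 0 ≤ iteratedDeriv j f 0) ∧ ∀ x : ℝ, 0 ≤ x → 0 ≤ f x := by
  have hExp : ∀ k ≤ m, IsExpPoly (fun j => n (k + j)) (m - k + 1) (fseq k) :=
    IsExpPoly.of_reduction
      ⟨P, fun j hj => (natDegree_eq_of_degree_eq_some (hdeg j (by omega))).le, hfseq0.trans hf⟩
      hfseqsucc
  have hm : IsExpPoly (fun j => n (m + j)) 1 (fseq m) := by simpa using hExp m le_rfl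
  have hAbs := absolutelyMonotoneOn_Ici_of_reduction (fun k hk => (hExp k hk).contDiff)
    hm.iteratedDeriv_eq_zero hfseqsucc hcond 0 m.zero_le
  rw [(hExp 0 m.zero_le).contDiff.absolutelyMonotoneOn_iff (uniqueDiffOn_Ici 0), hfseq0] at hAbs
  exact ⟨fun j => hAbs j 0 self_mem_Ici, fun x hx => hAbs 0 x hx⟩
end

section
/- For the Watson functions u, U (defined by t·e^{1−t} = e^{−x} with u(x) ≤ 1 ≤ U(x)), one has lim_{x→0⁺} (u'(x) + U'(x)) = 4/3 and lim_{x→∞} (u'(x) + U'(x)) = 1. -/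
open Real Filter

/-!
Put `a = 1 - u x` and `b = U x - 1`, so that `u' + U' = 2 - 1/a + 1/b`, and both solve
`φ(-a) = φ(b) = x` for `φ t = t - log (1 + t)` (`watsonPhi`). As `x → ∞`, `a → 1` and
`b → ∞`. As `x → 0⁺`, `a, b → 0`, and comparing the expansions `φ t = t²/2 - t³/3 + O(t⁴)`
at `-a` and `b` gives `b - a = (2/3) a b + O(a³)`, that is `1/a - 1/b → 2/3`.
-/

noncomputable def watsonPhi (t : ℝ) : ℝ := t - log (1 + t)

lemma watsonPhi_sub_one {t x : ℝ} (ht : 0 < t) (h : t * exp (1 - t) = exp (-x)) :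
    watsonPhi (t - 1) = x := by
  have hlog := congrArg log h
  rw [log_mul ht.ne' (exp_ne_zero _), log_exp, log_exp] at hlog
  rw [watsonPhi, add_sub_cancel]
  linarith

lemma watsonPhi_pos {t : ℝ} (ht : -1 < t) (h0 : t ≠ 0) : 0 < watsonPhi t := by
  have := log_lt_sub_one_of_pos (x := 1 + t) (by linarith) (by simpa using h0)
  rw [watsonPhi]; linarith

lemma watsonPhi_le_self {s : ℝ} (hs : 0 ≤ s) : watsonPhi s ≤ s := by
  have := log_nonneg (by linarith : (1 : ℝ) ≤ 1 + s)
  rw [watsonPhi]; linarith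

lemma watsonPhi_le_watsonPhi {s t : ℝ} (hs : -1 < s) (ht : -1 < t) (hst : 0 ≤ s * (t - s)) :
    watsonPhi s ≤ watsonPhi t := by
  have hs' : 0 < 1 + s := by linarith
  have hlog : log (1 + t) - log (1 + s) ≤ (t - s) / (1 + s) := by
    rw [← log_div (by linarith) hs'.ne']
    convert log_le_sub_one_of_pos (div_pos (by linarith : 0 < 1 + t) hs') using 1
    field_simp; ring
  have hdiv : (t - s) / (1 + s) ≤ t - s := by
    rw [div_le_iff₀ hs']; nlinarith
  rw [watsonPhi, watsonPhi]; linarith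

lemma tendsto_zero_of_watsonPhi_eq {α : Type*} {l : Filter α} {f g : α → ℝ}
    (hg : Tendsto g l (nhds 0)) (hf : ∀ᶠ y in l, -1 < f y ∧ watsonPhi (f y) = g y) :
    Tendsto f l (nhds 0) := by
  rw [tendsto_order]
  constructor
  · intro c hc
    rcases le_or_gt c (-1) with hc1 | hc1
    · filter_upwards [hf] with y hy using hc1.trans_lt hy.1
    · filter_upwards [hf, hg.eventually (gt_mem_nhds (watsonPhi_pos hc1 hc.ne))]
        with y ⟨hy1, hy⟩ hgy
      by_contra! hyc
      have := watsonPhi_le_watsonPhi hc1 hy1 (by nlinarith)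
      linarith
  · intro c hc
    filter_upwards [hf, hg.eventually (gt_mem_nhds (watsonPhi_pos (by linarith) hc.ne'))]
      with y ⟨hy1, hy⟩ hgy
    by_contra! hyc
    have := watsonPhi_le_watsonPhi (s := c) (t := f y) (by linarith) hy1 (by nlinarith)
    linarith

lemma abs_watsonPhi_sub_le {t : ℝ} (ht : |t| ≤ 1 / 2) :
    |watsonPhi t - (t ^ 2 / 2 - t ^ 3 / 3)| ≤ 2 * t ^ 4 := by
  have h := abs_log_sub_add_sum_range_le (x := -t) (by rw [abs_neg]; linarith) 3
  simp only [Finset.sum_range_succ, Finset.sum_range_zero, abs_neg, sub_neg_eq_add] at h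
  have hrem : |t| ^ 4 / (1 - |t|) ≤ 2 * t ^ 4 := by
    rw [div_le_iff₀ (by linarith), pow_abs, abs_of_nonneg (by positivity)]
    nlinarith [pow_nonneg (sq_nonneg t) 2]
  refine le_trans (le_of_eq ?_) (h.trans hrem)
  rw [← abs_neg, watsonPhi]
  congr 1
  push_cast
  ring

lemma abs_sq_sub_sq_sub_le_of_watsonPhi_neg_eq {a b : ℝ} (ha : |a| ≤ 1 / 2) (hb : |b| ≤ 1 / 2)
    (h : watsonPhi (-a) = watsonPhi b) :
    |b ^ 2 - a ^ 2 - 2 / 3 * (a ^ 3 + b ^ 3)| ≤ 4 * (a ^ 4 + b ^ 4) := by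
  have hna := abs_watsonPhi_sub_le (t := -a) (by rwa [abs_neg])
  have hnb := abs_watsonPhi_sub_le hb
  rw [h] at hna
  calc |b ^ 2 - a ^ 2 - 2 / 3 * (a ^ 3 + b ^ 3)|
      = 2 * |(watsonPhi b - ((-a) ^ 2 / 2 - (-a) ^ 3 / 3))
          - (watsonPhi b - (b ^ 2 / 2 - b ^ 3 / 3))| := by
        rw [← abs_two, ← abs_mul]; congr 1; ring
    _ ≤ 2 * (2 * (-a) ^ 4 + 2 * b ^ 4) := by
        gcongr; exact (abs_sub _ _).trans (add_le_add hna hnb)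
    _ = 4 * (a ^ 4 + b ^ 4) := by ring

lemma le_and_le_two_mul_of_watsonPhi_neg_eq {a b : ℝ} (ha : 0 < a) (ha' : a ≤ 1 / 6)
    (hb : 0 < b) (hb' : b ≤ 1 / 6) (h : watsonPhi (-a) = watsonPhi b) :
    a ≤ b ∧ b ≤ 2 * a := by
  have hE := abs_le.mp (abs_sq_sub_sq_sub_le_of_watsonPhi_neg_eq
    (by rw [abs_of_pos ha]; linarith) (by rw [abs_of_pos hb]; linarith) h)
  have ha4 : a ^ 4 ≤ a ^ 3 / 6 := by nlinarith [pow_pos ha 3]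
  have hb4 : b ^ 4 ≤ b ^ 3 / 6 := by nlinarith [pow_pos hb 3]
  have ha3 : a ^ 3 ≤ a ^ 2 / 6 := by nlinarith [pow_pos ha 2]
  have hb3 : b ^ 3 ≤ b ^ 2 / 6 := by nlinarith [pow_pos hb 2]
  -- the error `4 (a⁴ + b⁴)` is at most `(2/3)(a³ + b³)`, so `0 ≤ b² - a² ≤ (2/9)(a² + b²)`
  constructor
  · nlinarith
  · nlinarith

lemma abs_inv_sub_inv_sub_le_of_watsonPhi_neg_eq {a b : ℝ} (ha : 0 < a) (ha' : a ≤ 1 / 6)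
    (hb : 0 < b) (hb' : b ≤ 1 / 6) (h : watsonPhi (-a) = watsonPhi b) :
    |a⁻¹ - b⁻¹ - 2 / 3| ≤ 43 * a := by
  obtain ⟨hab, hba⟩ := le_and_le_two_mul_of_watsonPhi_neg_eq ha ha' hb hb' h
  set E := b ^ 2 - a ^ 2 - 2 / 3 * (a ^ 3 + b ^ 3) with hEdef
  have hE : |E| ≤ 68 * a ^ 4 := by
    refine (abs_sq_sub_sq_sub_le_of_watsonPhi_neg_eq
      (by rw [abs_of_pos ha]; linarith) (by rw [abs_of_pos hb]; linarith) h).trans ?_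
    nlinarith [pow_le_pow_left₀ hb.le hba 4]
  have hgap : b - a ≤ 9 * a ^ 2 := by
    have : (b - a) * (a + b) = 2 / 3 * (a ^ 3 + b ^ 3) + E := by rw [hEdef]; ring
    nlinarith [abs_le.mp hE, pow_le_pow_left₀ hb.le hba 3]
  have hpos : 0 < a * b * (a + b) := by positivity
  have hq : (a⁻¹ - b⁻¹ - 2 / 3) * (a * b * (a + b)) = 2 / 3 * (a + b) * (b - a) ^ 2 + E := by
    rw [hEdef]; field_simp; ring
  refine le_of_mul_le_mul_right ?_ hpos
  calc |a⁻¹ - b⁻¹ - 2 / 3| * (a * b * (a + b))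
      = |2 / 3 * (a + b) * (b - a) ^ 2 + E| := by rw [← hq, abs_mul, abs_of_pos hpos]
    _ ≤ 2 / 3 * (a + b) * (b - a) ^ 2 + |E| := by
        refine (abs_add_le _ _).trans ?_
        rw [abs_of_nonneg (by positivity)]
    _ ≤ 2 / 3 * (a + b) * (9 * a ^ 2) ^ 2 + 68 * a ^ 4 := by
        gcongr
    _ ≤ 43 * a * (a * b * (a + b)) := by
        nlinarith [pow_pos ha 3, mul_pos ha hb]

lemma tendsto_inv_sub_inv_of_watsonPhi_neg_eq {α : Type*} {l : Filter α} {a b : α → ℝ}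
    (ha : Tendsto a l (nhds 0)) (hb : Tendsto b l (nhds 0))
    (h : ∀ᶠ y in l, 0 < a y ∧ 0 < b y ∧ watsonPhi (-a y) = watsonPhi (b y)) :
    Tendsto (fun y => (a y)⁻¹ - (b y)⁻¹) l (nhds (2 / 3)) := by
  rw [tendsto_iff_norm_sub_tendsto_zero]
  refine squeeze_zero' (Eventually.of_forall fun _ => norm_nonneg _) ?_
    (by simpa using ha.const_mul 43)
  filter_upwards [h, ha.eventually (ge_mem_nhds (by norm_num : (0 : ℝ) < 1 / 6)),
    hb.eventually (ge_mem_nhds (by norm_num : (0 : ℝ) < 1 / 6))] with y ⟨hay, hby, hy⟩ ha' hb'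
  exact abs_inv_sub_inv_sub_le_of_watsonPhi_neg_eq hay ha' hby hb' hy

section WatsonFunctions

variable {u U : ℝ → ℝ}
  (hu : ∀ x > 0, u x ∈ Set.Ioo (0 : ℝ) 1 ∧ u x * exp (1 - u x) = exp (-x))
  (hU : ∀ x > 0, U x ∈ Set.Ioi (1 : ℝ) ∧ U x * exp (1 - U x) = exp (-x))
include hu hU

lemma tendsto_watson_nhdsGT_zero :
    Tendsto (fun x => 2 - (1 - u x)⁻¹ + (U x - 1)⁻¹) (nhdsWithin 0 (Set.Ioi 0))
      (nhds (4 / 3)) := by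
  have hid : Tendsto (fun x : ℝ => x) (nhdsWithin 0 (Set.Ioi 0)) (nhds 0) :=
    tendsto_id.mono_left nhdsWithin_le_nhds
  have hu1 : Tendsto (fun x => u x - 1) (nhdsWithin 0 (Set.Ioi 0)) (nhds 0) := by
    refine tendsto_zero_of_watsonPhi_eq hid ?_
    filter_upwards [self_mem_nhdsWithin] with x (hx : 0 < x)
    exact ⟨by linarith [(hu x hx).1.1], watsonPhi_sub_one (hu x hx).1.1 (hu x hx).2⟩
  have hU1 : Tendsto (fun x => U x - 1) (nhdsWithin 0 (Set.Ioi 0)) (nhds 0) := by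
    refine tendsto_zero_of_watsonPhi_eq hid ?_
    filter_upwards [self_mem_nhdsWithin] with x (hx : 0 < x)
    have h1 : 1 < U x := (hU x hx).1
    exact ⟨by linarith, watsonPhi_sub_one (by linarith) (hU x hx).2⟩
  have hinv := tendsto_inv_sub_inv_of_watsonPhi_neg_eq (a := fun x => 1 - u x)
    (by simpa using hu1.neg) hU1 (by
      filter_upwards [self_mem_nhdsWithin] with x (hx : 0 < x)
      obtain ⟨⟨hux, hux'⟩, hueq⟩ := hu x hx
      obtain ⟨hUx, hUeq⟩ := hU x hx
      refine ⟨by linarith, by linarith [hUx.out], ?_⟩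
      rw [neg_sub, watsonPhi_sub_one hux hueq, watsonPhi_sub_one (by linarith [hUx.out]) hUeq])
  convert (tendsto_const_nhds (x := (2 : ℝ))).sub hinv using 1
  · ext x; ring
  · norm_num

lemma tendsto_watson_atTop :
    Tendsto (fun x => 2 - (1 - u x)⁻¹ + (U x - 1)⁻¹) atTop (nhds 1) := by
  have hu0 : Tendsto u atTop (nhds 0) := by
    refine tendsto_of_tendsto_of_tendsto_of_le_of_le' tendsto_const_nhds
      tendsto_exp_neg_atTop_nhds_zero ?_ ?_
    · filter_upwards [eventually_gt_atTop 0] with x hx using (hu x hx).1.1.le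
    · filter_upwards [eventually_gt_atTop 0] with x hx
      obtain ⟨⟨hux, hux'⟩, hueq⟩ := hu x hx
      calc u x ≤ u x * exp (1 - u x) := le_mul_of_one_le_right hux.le (one_le_exp (by linarith))
        _ = exp (-x) := hueq
  have hU1 : Tendsto (fun x => U x - 1) atTop atTop := by
    refine tendsto_atTop_mono' atTop ?_ tendsto_id
    filter_upwards [eventually_gt_atTop 0] with x hx
    have h1 : 1 < U x := (hU x hx).1
    calc x = watsonPhi (U x - 1) := (watsonPhi_sub_one (by linarith) (hU x hx).2).symm
      _ ≤ U x - 1 := watsonPhi_le_self (by linarith)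
  have hinv : Tendsto (fun x => (1 - u x)⁻¹) atTop (nhds 1) := by
    simpa using (tendsto_const_nhds (x := (1 : ℝ))).sub hu0 |>.inv₀ (by norm_num)
  have hsum := ((tendsto_const_nhds (x := (2 : ℝ))).sub hinv).add hU1.inv_tendsto_atTop
  rwa [show (2 : ℝ) - 1 + 0 = 1 by norm_num] at hsum

end WatsonFunctions

theorem watson_deriv_sum_limits (u U : ℝ → ℝ)
    (hu : ∀ x > 0, u x ∈ Set.Ioo (0 : ℝ) 1 ∧ u x * Real.exp (1 - u x) = Real.exp (-x))
    (hU : ∀ x > 0, U x ∈ Set.Ioi (1 : ℝ) ∧ U x * Real.exp (1 - U x) = Real.exp (-x))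
    (hu' : ∀ x > 0, HasDerivAt u (-(u x) / (1 - u x)) x)
    (hU' : ∀ x > 0, HasDerivAt U (U x / (U x - 1)) x) :
    Tendsto (fun x => deriv u x + deriv U x) (nhdsWithin 0 (Set.Ioi 0)) (nhds (4 / 3)) ∧
    Tendsto (fun x => deriv u x + deriv U x) atTop (nhds 1) := by
  have hderiv : ∀ x > 0, 2 - (1 - u x)⁻¹ + (U x - 1)⁻¹ = deriv u x + deriv U x := by
    intro x hx
    have hu1 : 1 - u x ≠ 0 := by linarith [(hu x hx).1.2]
    have hU1 : U x - 1 ≠ 0 := by linarith [(hU x hx).1.out]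
    rw [(hu' x hx).deriv, (hU' x hx).deriv]
    field_simp
    ring
  exact ⟨(tendsto_watson_nhdsGT_zero hu hU).congr' (eventually_nhdsWithin_of_forall hderiv),
    (tendsto_watson_atTop hu hU).congr' (eventually_gt_atTop 0 |>.mono hderiv)⟩
end
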